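/- Let C ⊆ F_2^n be a neural code, let c ∈ M^{2n} be a motif, and let a ∈ M^{2n} be the motif obtained from c by replacing every component equal to 1 by *. Let S = {i ∈ [n] : a_i = a_{n+i} = 0}. Then p_c ⊇ J_{C^[p]} if and only if for every word w ∈ F_2^n satisfying, for all i ∈ [n] \ S, (a_i = 0 ⇒ w_i = 0) and (a_{n+i} = 0 ⇒ w_i = 1), there exists a word u ∈ C with u_j = w_j for all j ∈ [n] \ S. (In the language of the paper: p_c ⊇ J_{C^[p]} iff the depolarized partial motif obtained from a by deactivating the neurons in S is a partial motif of the partial code obtained from C by deactivating the neurons in S.) -/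

import Mathlib

/-! A Lagrange polynomial `L_w` lies in `p_c` iff some generator of `p_c` divides it, i.e. iff
`w ∉ V_c`; hence `J_E ⊆ p_c` iff `V_c ⊆ E`. As `C^[p]` is the complement of the union of the
varieties of `bar (pol (bar b))` over the maximal motifs `b` of `ᶜC`, the condition says that every
such `b` clashes with `c`: some `b_i = 1` meets `c_i = 0`, or some `b_i = 0` meets `c_{n+i} = 0`.
Clashing passes to refinements, so it may be demanded of all motifs of `ᶜC`. Neurons in `S` clash
with both values, and filling the remaining `*`s with non-clashing values reduces everything to
motifs of `ᶜC` that are words off `S`: that is the partial-motif condition. -/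

open MvPolynomial

/-- The field with two elements. -/
abbrev F2 := ZMod 2

/-- A motif indexed by `ι`: at each index it is `0`, `1`, or `*` (represented by `none`). -/
abbrev Motif (ι : Type*) := ι → Option F2

/-- The partial order on motifs: `a ≤ b` iff `a i = b i` for every index `i` with `b i ≠ *`. -/
def MotifLE {ι : Type*} (a b : Motif ι) : Prop :=
  ∀ (i : ι) (x : F2), b i = some x → a i = some x

/-- The variety of a motif: all words agreeing with the motif on its non-`*` coordinates. -/
def variety {ι : Type*} (a : Motif ι) : Set (ι → F2) :=
  {w | ∀ (i : ι) (x : F2), a i = some x → w i = x}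

/-- `a` is a motif of the code `C` iff its variety is contained in `C`. -/
def IsMotifOf {ι : Type*} (C : Set (ι → F2)) (a : Motif ι) : Prop :=
  variety a ⊆ C

/-- The set of maximal motifs of a code `C`. -/
def maxMot {ι : Type*} (C : Set (ι → F2)) : Set (Motif ι) :=
  {a | IsMotifOf C a ∧ ∀ b : Motif ι, IsMotifOf C b → MotifLE a b → a = b}

/-- Two motifs are disjoint if at some index both are non-`*` and they differ. -/
def DisjointMotifs {ι : Type*} (a b : Motif ι) : Prop :=
  ∃ (i : ι) (x : F2), a i = some x ∧ b i = some (1 - x)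

/-- Polarization of a motif of length `n`, as a motif of length `2n`
(indexed by `Fin n ⊕ Fin n`; `Sum.inl i` is coordinate `i`, `Sum.inr i` is coordinate `n+i`). -/
def polMotif {n : ℕ} (a : Motif (Fin n)) : Motif (Fin n ⊕ Fin n)
  | Sum.inl i => if a i = some 0 then some 0 else none
  | Sum.inr i => if a i = some 1 then some 0 else none

/-- The bar of a motif: `0 ↦ 1`, `1 ↦ 0`, `* ↦ *`. -/
def barMotif {ι : Type*} (a : Motif ι) : Motif ι :=
  fun i => (a i).map (fun x => 1 - x)

/-- The polarization of a code `C ⊆ F₂ⁿ`: the union of the varieties of the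
polarizations of the maximal motifs of `C`. -/
def polCode {n : ℕ} (C : Set (Fin n → F2)) : Set ((Fin n ⊕ Fin n) → F2) :=
  ⋃ a ∈ maxMot C, variety (polMotif a)

/-- The code `over-over-D-p` : the union of the varieties of `bar (pol (bar b))`
over the maximal motifs `b` of `D`. -/
def barPolBarCode {n : ℕ} (D : Set (Fin n → F2)) : Set ((Fin n ⊕ Fin n) → F2) :=
  ⋃ b ∈ maxMot D, variety (barMotif (polMotif (barMotif b)))

/-- The formal polarization of a code `C`: the complement of `barPolBarCode` of `Cᶜ`. -/
def formalPol {n : ℕ} (C : Set (Fin n → F2)) : Set ((Fin n ⊕ Fin n) → F2) :=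
  (barPolBarCode Cᶜ)ᶜ

/-- The Lagrange polynomial of a motif. -/
noncomputable def lagrange {ι : Type*} [Fintype ι] (a : Motif ι) : MvPolynomial ι F2 :=
  (∏ i ∈ Finset.univ.filter (fun i => a i = some 1), X i) *
    ∏ j ∈ Finset.univ.filter (fun j => a j = some 0), (1 - X j)

/-- The motif (with no stars) corresponding to a word. -/
def wordMotif {ι : Type*} (w : ι → F2) : Motif ι := fun i => some (w i)

/-- The neural ideal of a code: generated by the Lagrange polynomials of the
words in the complement of the code. -/
noncomputable def neuralIdeal {ι : Type*} [Fintype ι] (C : Set (ι → F2)) :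
    Ideal (MvPolynomial ι F2) :=
  Ideal.span ((fun w => lagrange (wordMotif w)) '' Cᶜ)

/-- The pseudo-monomial `∏_{i ∈ σ} X i * ∏_{j ∈ τ} (1 - X j)`. -/
noncomputable def pm {ι : Type*} (σ τ : Finset ι) : MvPolynomial ι F2 :=
  (∏ i ∈ σ, X i) * ∏ j ∈ τ, (1 - X j)

/-- A polynomial is a pseudo-monomial if it equals `pm σ τ` for disjoint `σ τ`. -/
def IsPseudoMonomial {ι : Type*} (f : MvPolynomial ι F2) : Prop :=
  ∃ σ τ : Finset ι, Disjoint σ τ ∧ f = pm σ τ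

/-- The canonical form of an ideal: the set of its minimal pseudo-monomials, i.e.
pseudo-monomials `f ∈ I` such that no pseudo-monomial `g ∈ I` of strictly smaller
degree divides `f`. -/
def CF {ι : Type*} (I : Ideal (MvPolynomial ι F2)) : Set (MvPolynomial ι F2) :=
  {f | IsPseudoMonomial f ∧ f ∈ I ∧
    ¬ ∃ g : MvPolynomial ι F2, IsPseudoMonomial g ∧ g ∈ I ∧
      g.totalDegree < f.totalDegree ∧ g ∣ f}

/-- The polarization of the pseudo-monomial with data `(σ, τ)`:
`∏_{i ∈ σ} X i * ∏_{j ∈ τ} Y j` (here `Y j = X (Sum.inr j)`). -/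
noncomputable def ppm {n : ℕ} (σ τ : Finset (Fin n)) : MvPolynomial (Fin n ⊕ Fin n) F2 :=
  (∏ i ∈ σ, X (Sum.inl i)) * ∏ j ∈ τ, X (Sum.inr j)

/-- `g` is the polarization of the pseudo-monomial `f`. -/
def PolPM {n : ℕ} (f : MvPolynomial (Fin n) F2) (g : MvPolynomial (Fin n ⊕ Fin n) F2) : Prop :=
  ∃ σ τ : Finset (Fin n), Disjoint σ τ ∧ f = pm σ τ ∧ g = ppm σ τ

/-- The set of polarizations of the elements of a set of pseudo-monomials. -/
def polSet {n : ℕ} (S : Set (MvPolynomial (Fin n) F2)) :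
    Set (MvPolynomial (Fin n ⊕ Fin n) F2) :=
  {g | ∃ f ∈ S, PolPM f g}

/-- The prime ideal of a motif: generated by `X i` for `a i = 0`
and `1 - X j` for `a j = 1`. -/
noncomputable def pIdeal {ι : Type*} (a : Motif ι) : Ideal (MvPolynomial ι F2) :=
  Ideal.span ({f | ∃ i, a i = some 0 ∧ f = X i} ∪ {f | ∃ j, a j = some 1 ∧ f = 1 - X j})

lemma F2.eq_zero_or_eq_one (x : F2) : x = 0 ∨ x = 1 := by
  revert x; decide

lemma F2.eq_one_sub_of_ne {x y : F2} : x ≠ y → y = 1 - x := by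
  revert x y; decide

section NeuralIdeal

variable {ι : Type*}

lemma eval_lagrange_wordMotif [Fintype ι] (w : ι → F2) :
    eval w (lagrange (wordMotif w)) = 1 := by
  simp only [lagrange, wordMotif, Option.some.injEq, map_mul, map_prod, eval_X, map_sub,
    map_one]
  rw [Finset.prod_eq_one (fun i hi => (Finset.mem_filter.mp hi).2),
    Finset.prod_eq_one (fun j hj => by rw [(Finset.mem_filter.mp hj).2, sub_zero]), one_mul]

lemma pIdeal_le_ker_eval {c : Motif ι} {w : ι → F2} (hw : w ∈ variety c) :
    pIdeal c ≤ RingHom.ker (eval w) := by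
  rw [pIdeal, Ideal.span_le]
  rintro f (⟨i, hi, rfl⟩ | ⟨j, hj, rfl⟩)
  · simp [RingHom.mem_ker, hw i 0 hi]
  · simp [RingHom.mem_ker, hw j 1 hj]

lemma lagrange_wordMotif_mem_pIdeal_iff [Fintype ι] (c : Motif ι) (w : ι → F2) :
    lagrange (wordMotif w) ∈ pIdeal c ↔ w ∉ variety c := by
  refine ⟨fun h hw => one_ne_zero (α := F2) ?_, fun hw => ?_⟩
  · simpa [eval_lagrange_wordMotif] using pIdeal_le_ker_eval hw h
  obtain ⟨i, x, hci, hwi⟩ : ∃ i x, c i = some x ∧ w i ≠ x := by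
    simpa [variety] using hw
  rcases F2.eq_zero_or_eq_one x with rfl | rfl
  · have hwi : w i = 1 := F2.eq_one_sub_of_ne (Ne.symm hwi)
    exact Ideal.mem_of_dvd _
      (dvd_mul_of_dvd_left (Finset.dvd_prod_of_mem _ (by simp [wordMotif, hwi])) _)
      (Ideal.subset_span (Or.inl ⟨i, hci, rfl⟩))
  · have hwi : w i = 0 := by simpa using F2.eq_one_sub_of_ne (Ne.symm hwi)
    exact Ideal.mem_of_dvd _
      (dvd_mul_of_dvd_right (Finset.dvd_prod_of_mem _ (by simp [wordMotif, hwi])) _)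
      (Ideal.subset_span (Or.inr ⟨i, hci, rfl⟩))

lemma neuralIdeal_le_pIdeal_iff [Fintype ι] (E : Set (ι → F2)) (c : Motif ι) :
    neuralIdeal E ≤ pIdeal c ↔ variety c ⊆ E := by
  simp only [neuralIdeal, Ideal.span_le, Set.image_subset_iff, Set.compl_subset_comm (s := E)]
  exact forall_congr' fun w => by
    simp [lagrange_wordMotif_mem_pIdeal_iff]

end NeuralIdeal

section Motifs

variable {ι : Type*}

lemma disjoint_variety_iff (a b : Motif ι) :
    Disjoint (variety a) (variety b) ↔ DisjointMotifs a b := by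
  refine ⟨fun h => ?_, fun ⟨i, x, hai, hbi⟩ => Set.disjoint_left.mpr fun w hwa hwb => ?_⟩
  · by_contra hab
    have hw : (fun i => (a i).getD ((b i).getD 0)) ∈ variety b := by
      intro i y hbi
      rcases hai : a i with _ | x
      · simp [hai, hbi]
      · by_contra hxy
        simp only [hai, Option.getD_some] at hxy
        exact hab ⟨i, x, hai, hbi ▸ congrArg some (F2.eq_one_sub_of_ne hxy)⟩
    refine Set.disjoint_left.mp h (fun i x hai => ?_) hw
    simp [hai]
  · have hx := (hwa i x hai).symm.trans (hwb i _ hbi)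
    exact (by decide : ∀ x : F2, x ≠ 1 - x) x hx

lemma motifLE_antisymm {a b : Motif ι} (hab : MotifLE a b) (hba : MotifLE b a) : a = b := by
  funext i
  rcases hb : b i with _ | x
  · rcases ha : a i with _ | y
    · rfl
    · simpa [hb] using hba i y ha
  · exact hab i x hb

def specifiedEntries (a : Motif ι) : Set (ι × F2) := {p | a p.1 = some p.2}

lemma exists_mem_maxMot_of_isMotifOf [Finite ι] {D : Set (ι → F2)} {e : Motif ι}
    (he : IsMotifOf D e) : ∃ b ∈ maxMot D, MotifLE e b := by
  obtain ⟨b, ⟨hbD, heb⟩, hmin⟩ := Set.Finite.exists_minimalFor specifiedEntries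
    {b | IsMotifOf D b ∧ MotifLE e b} (Set.toFinite _) ⟨e, he, fun _ _ h => h⟩
  refine ⟨b, ⟨hbD, fun b' hb'D hbb' => ?_⟩, heb⟩
  have hle : specifiedEntries b' ≤ specifiedEntries b := fun p hp => hbb' p.1 p.2 hp
  have hge := hmin ⟨hb'D, fun i x h => heb i x (hbb' i x h)⟩ hle
  exact motifLE_antisymm hbb' fun i x h => hge (a := (i, x)) h

lemma forall_maxMot_iff [Finite ι] (D : Set (ι → F2)) {P : Motif ι → Prop}
    (hP : ∀ e b, MotifLE e b → P b → P e) :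
    (∀ b ∈ maxMot D, P b) ↔ ∀ e, IsMotifOf D e → P e := by
  refine ⟨fun h e he => ?_, fun h b hb => h b hb.1⟩
  obtain ⟨b, hb, heb⟩ := exists_mem_maxMot_of_isMotifOf he
  exact hP e b heb (h b hb)

end Motifs

lemma forall_isMotifOf_compl_iff_forall_partial_word {ι : Type*} (C : Set (ι → F2))
    (K : ι → F2 → Prop) (S : Set ι) (hS : ∀ i, i ∈ S ↔ ∀ x, K i x) :
    (∀ e, IsMotifOf Cᶜ e → ∃ i x, e i = some x ∧ K i x) ↔
      ∀ w : ι → F2, (∀ i ∉ S, ¬K i (w i)) → ∃ u ∈ C, ∀ j ∉ S, u j = w j := by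
  classical
  constructor
  · intro h w hw
    by_contra! hC
    obtain ⟨i, x, hi, hK⟩ :=
      h (fun i => if i ∈ S then none else some (w i)) fun u hu huC => by
        obtain ⟨j, hjS, hj⟩ := hC u huC
        exact hj (hu j (w j) (by simp [hjS]))
    by_cases hiS : i ∈ S
    · simp [hiS] at hi
    · simp only [hiS, if_false, Option.some.injEq] at hi
      exact hw i hiS (hi ▸ hK)
  · intro h e he
    by_contra! he'
    -- fill the `*`s of `e` off `S` with values avoiding `K`
    set w : ι → F2 := fun i => (e i).getD (Classical.epsilon fun x => ¬K i x)
    have hw : ∀ i ∉ S, ¬K i (w i) := by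
      intro i hiS
      rcases hei : e i with _ | x <;> simp only [w, hei, Option.getD_none, Option.getD_some]
      · exact Classical.epsilon_spec (by simpa [hS] using hiS)
      · exact he' i x hei
    obtain ⟨u, huC, hu⟩ := h w hw
    refine he (fun i x hei => ?_) huC
    have hiS : i ∉ S := fun hiS => he' i x hei ((hS i).mp hiS x)
    simp [hu i hiS, w, hei]

section Polarization

variable {n : ℕ}

def PolClash (c : Motif (Fin n ⊕ Fin n)) (i : Fin n) (x : F2) : Prop :=
  x = 1 ∧ c (Sum.inl i) = some 0 ∨ x = 0 ∧ c (Sum.inr i) = some 0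

lemma forall_polClash_iff (c : Motif (Fin n ⊕ Fin n)) (i : Fin n) :
    (∀ x, PolClash c i x) ↔ c (Sum.inl i) = some 0 ∧ c (Sum.inr i) = some 0 := by
  refine ⟨fun h => ⟨?_, ?_⟩, fun h x => ?_⟩
  · simpa [PolClash] using h 1
  · simpa [PolClash] using h 0
  · rcases F2.eq_zero_or_eq_one x with rfl | rfl <;> simp [PolClash, h]

lemma not_polClash_iff (c : Motif (Fin n ⊕ Fin n)) (i : Fin n) (x : F2) :
    ¬PolClash c i x ↔ (c (Sum.inl i) = some 0 → x = 0) ∧ (c (Sum.inr i) = some 0 → x = 1) := by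
  rcases F2.eq_zero_or_eq_one x with rfl | rfl <;> simp [PolClash]

lemma barMotif_polMotif_barMotif_inl (b : Motif (Fin n)) (i : Fin n) :
    barMotif (polMotif (barMotif b)) (Sum.inl i) = if b i = some 1 then some 1 else none := by
  rcases hb : b i with _ | y
  · simp [barMotif, polMotif, hb]
  · rcases F2.eq_zero_or_eq_one y with rfl | rfl <;> simp [barMotif, polMotif, hb]

lemma barMotif_polMotif_barMotif_inr (b : Motif (Fin n)) (i : Fin n) :
    barMotif (polMotif (barMotif b)) (Sum.inr i) = if b i = some 0 then some 1 else none := by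
  rcases hb : b i with _ | y
  · simp [barMotif, polMotif, hb]
  · rcases F2.eq_zero_or_eq_one y with rfl | rfl <;> simp [barMotif, polMotif, hb]

lemma disjointMotifs_barMotif_polMotif_barMotif_iff (c : Motif (Fin n ⊕ Fin n))
    (b : Motif (Fin n)) :
    DisjointMotifs c (barMotif (polMotif (barMotif b))) ↔
      ∃ i x, b i = some x ∧ PolClash c i x := by
  constructor
  · rintro ⟨i | i, x, hc, hb⟩
    · rw [barMotif_polMotif_barMotif_inl] at hb
      split_ifs at hb with hbi
      obtain rfl : x = 0 := by linear_combination Option.some.inj hb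
      exact ⟨i, 1, hbi, .inl ⟨rfl, hc⟩⟩
    · rw [barMotif_polMotif_barMotif_inr] at hb
      split_ifs at hb with hbi
      obtain rfl : x = 0 := by linear_combination Option.some.inj hb
      exact ⟨i, 0, hbi, .inr ⟨rfl, hc⟩⟩
  · rintro ⟨i, x, hb, ⟨rfl, hc⟩ | ⟨rfl, hc⟩⟩
    · exact ⟨Sum.inl i, 0, hc, by simp [barMotif_polMotif_barMotif_inl, hb]⟩
    · exact ⟨Sum.inr i, 0, hc, by simp [barMotif_polMotif_barMotif_inr, hb]⟩

lemma variety_subset_formalPol_iff (C : Set (Fin n → F2)) (c : Motif (Fin n ⊕ Fin n)) :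
    variety c ⊆ formalPol C ↔ ∀ b ∈ maxMot Cᶜ, ∃ i x, b i = some x ∧ PolClash c i x := by
  simp only [formalPol, barPolBarCode, Set.subset_compl_iff_disjoint_right,
    Set.disjoint_iUnion₂_right, disjoint_variety_iff,
    disjointMotifs_barMotif_polMotif_barMotif_iff]

end Polarization

/-- `p_c ⊇ J_{C^[p]}` iff the depolarized partial motif obtained from
`a` (the motif `c` with its `1`s replaced by `*`s) by deactivating the neurons in
`S = {i : a_i = a_{n+i} = 0}` is a partial motif of the partial code obtained from
`C` by deactivating the neurons in `S`. -/
theorem mem_minPrimes_formalPol_iff_partial_motif {n : ℕ} (C : Set (Fin n → F2))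
    (c a : Motif (Fin n ⊕ Fin n))
    (ha : ∀ α : Fin n ⊕ Fin n, a α = if c α = some 1 then none else c α)
    (S : Set (Fin n))
    (hS : S = {i : Fin n | a (Sum.inl i) = some 0 ∧ a (Sum.inr i) = some 0}) :
    neuralIdeal (formalPol C) ≤ pIdeal c ↔
      ∀ w : Fin n → F2,
        (∀ i : Fin n, i ∉ S →
          (a (Sum.inl i) = some 0 → w i = 0) ∧ (a (Sum.inr i) = some 0 → w i = 1)) →
        ∃ u ∈ C, ∀ j : Fin n, j ∉ S → u j = w j := by
  have ha0 : ∀ α, a α = some 0 ↔ c α = some 0 := fun α => by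
    rw [ha α]; split_ifs with h <;> simp [h]
  have hS' : ∀ i, i ∈ S ↔ ∀ x, PolClash c i x := fun i => by
    rw [forall_polClash_iff, hS, Set.mem_ofPred_eq, ha0, ha0]
  simp only [ha0, ← not_polClash_iff]
  rw [neuralIdeal_le_pIdeal_iff, variety_subset_formalPol_iff,
    forall_maxMot_iff _ fun e b heb ⟨i, x, hb, hK⟩ => ⟨i, x, heb i x hb, hK⟩,
    forall_isMotifOf_compl_iff_forall_partial_word C _ S hS']
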